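/- arXiv:2508.12241 — 2 statements merged into one kernel-verified Lean document; each statement's English description precedes it below -/
import Mathlib

section
/- Let a_1, …, a_N be integers. There exists a sign vector y ∈ {−1, +1}^N with ∑_{n=1}^N y_n a_n = 0 if and only if there exists p ∈ ℝ^N with p_n² ≥ 1 for every n ∈ {1,…,N} and ∑_{n=1}^N p_n² + (∑_{n=1}^N a_n p_n)² ≤ N. -/
/-- PARTITION as sign vectors is equivalent to the continuous quadratic problem
attaining value at most `N`. -/
theorem partition_iff_continuous (N : ℕ) (a : Fin N → ℤ) :
    (∃ y : Fin N → ℤ, (∀ n : Fin N, y n = -1 ∨ y n = 1) ∧ ∑ n, y n * a n = 0) ↔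
      (∃ p : Fin N → ℝ, (∀ n : Fin N, 1 ≤ p n ^ 2) ∧
        (∑ n, p n ^ 2) + (∑ n, (a n : ℝ) * p n) ^ 2 ≤ (N : ℝ)) := by
  constructor
  · rintro ⟨y, hy, hsum⟩
    refine ⟨fun n => (y n : ℝ), fun n => ?_, ?_⟩
    · rcases hy n with h | h <;> simp [h]
    · have h1 : ∀ n : Fin N, ((y n : ℝ)) ^ 2 = 1 := by
        intro n; rcases hy n with h | h <;> simp [h]
      have h2 : (∑ n, (a n : ℝ) * (y n : ℝ)) = 0 := by
        have := congrArg (fun z : ℤ => (z : ℝ)) hsum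
        push_cast at this
        rw [← this]
        exact Finset.sum_congr rfl fun n _ => by ring
      simp [h1, h2]
  · rintro ⟨p, hp, hle⟩
    have hsumge : (N : ℝ) ≤ ∑ n, p n ^ 2 := by
      calc (N : ℝ) = ∑ _n : Fin N, (1 : ℝ) := by simp
        _ ≤ ∑ n, p n ^ 2 := Finset.sum_le_sum fun n _ => hp n
    have hsq : (∑ n, (a n : ℝ) * p n) ^ 2 = 0 := by nlinarith [sq_nonneg (∑ n, (a n : ℝ) * p n)]
    have hzero : (∑ n, (a n : ℝ) * p n) = 0 := pow_eq_zero_iff (n := 2) (by norm_num) |>.mp hsq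
    have hsumeq : (∑ n, p n ^ 2) = (N : ℝ) := le_antisymm (by nlinarith) hsumge
    have heach : ∀ n : Fin N, p n ^ 2 = 1 := by
      have h0 : (∑ n, (p n ^ 2 - 1)) = 0 := by
        rw [Finset.sum_sub_distrib, hsumeq]; simp
      have := (Finset.sum_eq_zero_iff_of_nonneg
        (fun n _ => by linarith [hp n])).mp h0
      intro n
      have := this n (Finset.mem_univ n)
      linarith
    have hpm : ∀ n : Fin N, p n = 1 ∨ p n = -1 := by
      intro n
      have h := heach n
      have : (p n - 1) * (p n + 1) = 0 := by nlinarith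
      rcases mul_eq_zero.mp this with h | h
      · left; linarith
      · right; linarith
    refine ⟨fun n => if p n = 1 then 1 else -1, fun n => by by_cases h : p n = 1 <;> simp [h], ?_⟩
    have hcast : ∀ n : Fin N, ((if p n = (1:ℝ) then (1:ℤ) else -1 : ℤ) : ℝ) = p n := by
      intro n
      rcases hpm n with h | h
      · simp [h]
      · rw [if_neg (by rw [h]; norm_num)]; simp [h]
    have : ((∑ n, (if p n = (1:ℝ) then (1:ℤ) else -1) * a n : ℤ) : ℝ) = 0 := by
      push_cast
      rw [← hzero]
      refine Finset.sum_congr rfl fun n _ => ?_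
      rcases hpm n with h | h
      · rw [h]; simp
      · rw [h, if_neg (by norm_num)]; ring
    exact_mod_cast this
end

section
/- Let a ∈ ℤ^N, regard a as a vector in ℝ^N, let Q = I_N + a aᵀ, and let V be an invertible real N×N matrix with Vᵀ V = Q. Then there exists a sign vector y ∈ {−1, +1}^N with ∑_{n=1}^N y_n a_n = 0 if and only if there exists w ∈ ℝ^N with ‖w‖₂² ≤ N and |(V⁻¹ w)_n| ≥ 1 for every n ∈ {1,…,N}. -/
open Matrix

/-!
Substituting `w = V p` turns `‖w‖₂²` into `pᵀ Q p = ∑ pₙ² + (∑ aₙ pₙ)²` and `V⁻¹ w` into `p`.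
Once every `|pₙ| ≥ 1`, the first sum alone is at least `N`, so the budget `N` forces `|pₙ| = 1`
for all `n` and `∑ aₙ pₙ = 0`: the feasible `p` are exactly the balancing sign vectors.
-/

section

variable {ι : Type*} [Fintype ι]

theorem dotProduct_mulVec_self_eq_of_transpose_mul_eq {R : Type*} [CommRing R] [DecidableEq ι]
    {V : Matrix ι ι R} {u : ι → R} (hQ : Vᵀ * V = 1 + vecMulVec u u) (p : ι → R) :
    (V *ᵥ p) ⬝ᵥ (V *ᵥ p) = p ⬝ᵥ p + (u ⬝ᵥ p) ^ 2 := by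
  have hquad : p ⬝ᵥ ((Vᵀ * V) *ᵥ p) = (V *ᵥ p) ⬝ᵥ (V *ᵥ p) := by
    rw [← mulVec_mulVec, dotProduct_mulVec, vecMul_transpose]
  rw [← hquad, hQ, add_mulVec, one_mulVec, dotProduct_add, vecMulVec_mulVec]
  simp [dotProduct_comm p u, sq]

theorem EuclideanSpace.real_norm_sq_eq_dotProduct (w : EuclideanSpace ℝ ι) :
    ‖w‖ ^ 2 = w.ofLp ⬝ᵥ w.ofLp := by
  rw [← real_inner_self_eq_norm_sq, EuclideanSpace.inner_eq_star_dotProduct, star_trivial]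

theorem exists_norm_sq_le_and_one_le_abs_inv_mulVec_iff [DecidableEq ι] {V : Matrix ι ι ℝ}
    {u : ι → ℝ} (hV : IsUnit V) (hQ : Vᵀ * V = 1 + vecMulVec u u) (c : ℝ) :
    (∃ w : EuclideanSpace ℝ ι, ‖w‖ ^ 2 ≤ c ∧ ∀ n, 1 ≤ |(V⁻¹ *ᵥ (w : ι → ℝ)) n|) ↔
      ∃ p : ι → ℝ, p ⬝ᵥ p + (u ⬝ᵥ p) ^ 2 ≤ c ∧ ∀ n, 1 ≤ |p n| := by
  have hdet := (isUnit_iff_isUnit_det V).1 hV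
  constructor
  · rintro ⟨w, hw, hinv⟩
    refine ⟨V⁻¹ *ᵥ w, ?_, hinv⟩
    rwa [← dotProduct_mulVec_self_eq_of_transpose_mul_eq hQ, mulVec_mulVec,
      mul_nonsing_inv _ hdet, one_mulVec, ← EuclideanSpace.real_norm_sq_eq_dotProduct]
  · rintro ⟨p, hp, hinv⟩
    refine ⟨WithLp.toLp 2 (V *ᵥ p), ?_, ?_⟩
    · rwa [EuclideanSpace.real_norm_sq_eq_dotProduct,
        dotProduct_mulVec_self_eq_of_transpose_mul_eq hQ]
    · simpa [mulVec_mulVec, nonsing_inv_mul _ hdet] using hinv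

theorem abs_eq_one_and_dotProduct_eq_zero_iff {u p : ι → ℝ} :
    ((∀ n, |p n| = 1) ∧ u ⬝ᵥ p = 0) ↔
      p ⬝ᵥ p + (u ⬝ᵥ p) ^ 2 ≤ Fintype.card ι ∧ ∀ n, 1 ≤ |p n| := by
  have hsum : p ⬝ᵥ p = ∑ n, |p n| ^ 2 := by simp [dotProduct, sq]
  have hcard : (Fintype.card ι : ℝ) = ∑ _n : ι, 1 := by simp
  constructor
  · rintro ⟨hp, hup⟩
    exact ⟨by simp [hsum, hp, hup], fun n => (hp n).ge⟩
  · rintro ⟨hle, hp⟩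
    have hle_sq : ∀ n ∈ Finset.univ, (1 : ℝ) ≤ |p n| ^ 2 := fun n _ => one_le_pow₀ (hp n)
    have hcard_le : (Fintype.card ι : ℝ) ≤ p ⬝ᵥ p := hcard ▸ hsum ▸ Finset.sum_le_sum hle_sq
    have hup : u ⬝ᵥ p = 0 := by nlinarith [sq_nonneg (u ⬝ᵥ p)]
    have heq : ∑ _n : ι, (1 : ℝ) = ∑ n, |p n| ^ 2 := by
      rw [← hcard, ← hsum]
      linarith [sq_nonneg (u ⬝ᵥ p)]
    refine ⟨fun n => ?_, hup⟩
    have hsq := (Finset.sum_eq_sum_iff_of_le hle_sq).1 heq n (Finset.mem_univ n)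
    exact (pow_eq_one_iff_of_nonneg (abs_nonneg _) two_ne_zero).1 hsq.symm

theorem exists_sign_vector_iff (a : ι → ℤ) :
    (∃ y : ι → ℤ, (∀ n, y n = -1 ∨ y n = 1) ∧ ∑ n, y n * a n = 0) ↔
      ∃ p : ι → ℝ, (∀ n, |p n| = 1) ∧ (fun n => (a n : ℝ)) ⬝ᵥ p = 0 := by
  constructor
  · rintro ⟨y, hy, hya⟩
    refine ⟨fun n => y n, fun n => ?_, ?_⟩
    · rcases hy n with h | h <;> simp [h]
    · simpa [dotProduct, mul_comm] using congrArg (Int.cast : ℤ → ℝ) hya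
  · rintro ⟨p, hp, hap⟩
    have hsign : ∀ n, ∃ z : ℤ, (z = -1 ∨ z = 1) ∧ (z : ℝ) = p n := fun n => by
      rcases (abs_eq zero_le_one).1 (hp n) with h | h
      exacts [⟨1, Or.inr rfl, by simp [h]⟩, ⟨-1, Or.inl rfl, by simp [h]⟩]
    choose y hy hyp using hsign
    refine ⟨y, hy, ?_⟩
    exact_mod_cast (by simpa [← hyp, dotProduct, mul_comm] using hap :
      ((∑ n, y n * a n : ℤ) : ℝ) = 0)

end

/-- Reduction of PARTITION to real beamforming feasibility: with
`Q = I + a aᵀ` and `Vᵀ V = Q` (`V` invertible), a zero-sum sign vector for `a`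
exists iff some `w` with `‖w‖₂² ≤ N` satisfies `|(V⁻¹ w)ₙ| ≥ 1` for all `n`. -/
theorem partition_iff_beamforming (N : ℕ) (a : Fin N → ℤ)
    (V : Matrix (Fin N) (Fin N) ℝ) (hV : IsUnit V)
    (hQ : Vᵀ * V = 1 + Matrix.vecMulVec (fun n => (a n : ℝ)) (fun n => (a n : ℝ))) :
    (∃ y : Fin N → ℤ, (∀ n : Fin N, y n = -1 ∨ y n = 1) ∧ ∑ n, y n * a n = 0) ↔
      (∃ w : EuclideanSpace ℝ (Fin N), ‖w‖ ^ 2 ≤ (N : ℝ) ∧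
        ∀ n : Fin N, 1 ≤ |(V⁻¹ *ᵥ (w : Fin N → ℝ)) n|) := by
  rw [exists_sign_vector_iff, exists_norm_sq_le_and_one_le_abs_inv_mulVec_iff hV hQ]
  exact exists_congr fun p => by simpa using abs_eq_one_and_dotProduct_eq_zero_iff (p := p)
end
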